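/- Let A = 1 − q·m, Δ₁ = A² − 4h, h₁ = m − (q+1)·m², and suppose A > 0 and Δ₁ > 0; let x₆ = (A − √Δ₁)/2. If m < A/2 and h > h₁, then x₆ > m; consequently the Jacobian matrix of F at E₆ = (x₆, m) has eigenvalues 1 − 2x₆ − q·m > 0 and s·m·(1 − m/x₆) > 0, i.e. two positive real eigenvalues. Moreover, if m < A/2 and h = h₁, then x₆ = m. -/

import Mathlib

/-!
`x₆` is the smaller root of `x (A - x) = h`, and `x ↦ x (A - x)` is increasing on `x < A/2`;
so for `m < A/2`, `x₆ > m` exactly when `h > m (A - m) = h₁`, and `x₆ = m` when `h = h₁`.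
The predator equation carries the factor `y - m`, so on the line `y = m` its `x`-derivative
vanishes and the Jacobian at `E₆` is upper triangular, with diagonal entries `A - 2x₆ = √Δ₁`
and `s m (1 - m/x₆)`.
-/

/-- The predator–prey vector field
    `F(x,y) = (x(1-x) - q x y - h, s y (1 - y/x)(y - m))`. -/
noncomputable def F (q s h m : ℝ) (p : ℝ × ℝ) : ℝ × ℝ :=
  (p.1 * (1 - p.1) - q * p.1 * p.2 - h, s * p.2 * (1 - p.2 / p.1) * (p.2 - m))

/-- The continuous linear map `ℝ² → ℝ²` with matrix `[[a, b], [c, d]]`. -/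
noncomputable def clm (a b c d : ℝ) : (ℝ × ℝ) →L[ℝ] (ℝ × ℝ) :=
  (a • ContinuousLinearMap.fst ℝ ℝ ℝ + b • ContinuousLinearMap.snd ℝ ℝ ℝ).prod
    (c • ContinuousLinearMap.fst ℝ ℝ ℝ + d • ContinuousLinearMap.snd ℝ ℝ ℝ)

@[simp]
theorem clm_apply (a b c d : ℝ) (v : ℝ × ℝ) :
    clm a b c d v = (a * v.1 + b * v.2, c * v.1 + d * v.2) :=
  rfl

theorem Matrix.spectrum_fin_two_upperTriangular {K : Type*} [Field K] (a b d : K) :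
    spectrum K !![a, b; 0, d] = {a, d} := by
  ext μ
  rw [spectrum.mem_iff, Matrix.isUnit_iff_isUnit_det, isUnit_iff_ne_zero, not_not]
  simp [Matrix.det_fin_two, Matrix.algebraMap_eq_diagonal, sub_eq_zero, eq_comm]

theorem hasFDerivAt_F (q s h m : ℝ) {x : ℝ} (y : ℝ) (hx : x ≠ 0) :
    HasFDerivAt (F q s h m)
      (clm (1 - 2*x - q*y) (-q*x) (s * y^2 * (y - m) / x^2)
        (s * ((1 - 2*y/x) * (y - m) + y * (1 - y/x)))) (x, y) := by
  have hfst := hasFDerivAt_fst (𝕜 := ℝ) (p := ((x, y) : ℝ × ℝ))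
  have hsnd := hasFDerivAt_snd (𝕜 := ℝ) (p := ((x, y) : ℝ × ℝ))
  have hprey := ((hfst.mul (hfst.const_sub 1)).sub ((hfst.const_mul q).mul hsnd)).sub_const h
  have hinv := (hasFDerivAt_inv hx).comp (x, y) hfst
  have hpred := ((hsnd.const_mul s).mul ((hsnd.mul hinv).const_sub 1)).mul (hsnd.sub_const m)
  refine ((hprey.prodMk hpred).congr_fderiv ?_).congr_of_eventuallyEq
    (.of_forall fun p => ?_)
  · refine ContinuousLinearMap.ext fun v => ?_
    simp only [clm_apply, ContinuousLinearMap.prod_apply, add_apply, sub_apply, neg_apply,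
      smul_apply, ContinuousLinearMap.comp_apply, ContinuousLinearMap.coe_fst',
      ContinuousLinearMap.coe_snd', ContinuousLinearMap.toSpanSingleton_apply, Pi.mul_apply,
      Function.comp_apply, smul_eq_mul, Prod.mk.injEq]
    constructor <;> field_simp <;> ring
  · simp [F, div_eq_mul_inv]

theorem hasFDerivAt_F_of_snd_eq (q s h m : ℝ) {x : ℝ} (hx : x ≠ 0) :
    HasFDerivAt (F q s h m) (clm (1 - 2*x - q*m) (-q*x) 0 (s*m*(1 - m/x))) (x, m) := by
  convert hasFDerivAt_F q s h m m hx using 2 <;> ring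

theorem lt_sub_sqrt_div_two_iff {A h m : ℝ} (hm : 2 * m < A) :
    m < (A - √(A^2 - 4*h)) / 2 ↔ m * (A - m) < h := by
  rw [lt_div_iff₀ two_pos, lt_sub_comm, Real.sqrt_lt' (by linarith)]
  constructor <;> intro <;> nlinarith

theorem sub_sqrt_div_two_eq_of_eq {A h m : ℝ} (hm : 2 * m ≤ A) (hh : h = m * (A - m)) :
    (A - √(A^2 - 4*h)) / 2 = m := by
  have hdisc : A^2 - 4*h = (A - 2*m)^2 := by rw [hh]; ring
  rw [hdisc, Real.sqrt_sq (by linarith)]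
  ring

theorem stmt13_general (q s h m x6 : ℝ) (hs : 0 < s) (hm0 : 0 < m)
    (hΔ : 0 < (1 - q*m)^2 - 4*h)
    (hx6 : x6 = (1 - q*m - Real.sqrt ((1 - q*m)^2 - 4*h))/2) :
    ((m < (1 - q*m)/2 ∧ m - (q+1)*m^2 < h) →
      m < x6 ∧
      HasFDerivAt (F q s h m)
        (clm (1 - 2*x6 - q*m) (-q*x6) 0 (s*m*(1 - m/x6))) ((x6, m) : ℝ × ℝ) ∧
      (1 - 2*x6 - q*m) ∈ spectrum ℝ
        (!![1 - 2*x6 - q*m, -q*x6; 0, s*m*(1 - m/x6)] : Matrix (Fin 2) (Fin 2) ℝ) ∧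
      (s*m*(1 - m/x6)) ∈ spectrum ℝ
        (!![1 - 2*x6 - q*m, -q*x6; 0, s*m*(1 - m/x6)] : Matrix (Fin 2) (Fin 2) ℝ) ∧
      0 < 1 - 2*x6 - q*m ∧ 0 < s*m*(1 - m/x6)) ∧
    ((m < (1 - q*m)/2 ∧ h = m - (q+1)*m^2) → x6 = m) := by
  constructor
  · rintro ⟨hmA, hh₁⟩
    have hmx6 : m < x6 := by
      rw [hx6]
      exact (lt_sub_sqrt_div_two_iff (by linarith)).2 (by linarith)
    have hx6pos : 0 < x6 := hm0.trans hmx6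
    simp only [Matrix.spectrum_fin_two_upperTriangular, Set.mem_insert_iff, Set.mem_singleton_iff,
      true_or, or_true, true_and]
    refine ⟨hmx6, hasFDerivAt_F_of_snd_eq q s h m hx6pos.ne', ?_, ?_⟩
    · have hsqrt : 1 - 2*x6 - q*m = √((1 - q*m)^2 - 4*h) := by rw [hx6]; ring
      exact hsqrt ▸ Real.sqrt_pos.2 hΔ
    · have : 0 < 1 - m/x6 := by rwa [sub_pos, div_lt_one hx6pos]
      positivity
  · rintro ⟨hmA, rfl⟩
    rw [hx6]
    exact sub_sqrt_div_two_eq_of_eq (by linarith) (by ring)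

/-- With `A = 1 - q m > 0`, `Δ₁ = A² - 4h > 0`, `h₁ = m - (q+1)m²`, and
`x₆ = (A - √Δ₁)/2`: if `m < A/2` and `h > h₁` then `x₆ > m` and the Jacobian of `F` at
`E₆ = (x₆, m)` has the two positive eigenvalues `1 - 2x₆ - q m` and `s m (1 - m/x₆)`;
moreover if `m < A/2` and `h = h₁` then `x₆ = m`. -/
theorem stmt13 (q s h m x6 : ℝ) (hq : 0 < q) (hs : 0 < s) (hh : 0 < h)
    (hm0 : 0 < m) (hm1 : m < 1)
    (hA : 0 < 1 - q*m) (hΔ : 0 < (1 - q*m)^2 - 4*h)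
    (hx6 : x6 = (1 - q*m - Real.sqrt ((1 - q*m)^2 - 4*h))/2) :
    ((m < (1 - q*m)/2 ∧ m - (q+1)*m^2 < h) →
      m < x6 ∧
      HasFDerivAt (F q s h m)
        (clm (1 - 2*x6 - q*m) (-q*x6) 0 (s*m*(1 - m/x6))) ((x6, m) : ℝ × ℝ) ∧
      (1 - 2*x6 - q*m) ∈ spectrum ℝ
        (!![1 - 2*x6 - q*m, -q*x6; 0, s*m*(1 - m/x6)] : Matrix (Fin 2) (Fin 2) ℝ) ∧
      (s*m*(1 - m/x6)) ∈ spectrum ℝ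
        (!![1 - 2*x6 - q*m, -q*x6; 0, s*m*(1 - m/x6)] : Matrix (Fin 2) (Fin 2) ℝ) ∧
      0 < 1 - 2*x6 - q*m ∧ 0 < s*m*(1 - m/x6)) ∧
    ((m < (1 - q*m)/2 ∧ h = m - (q+1)*m^2) → x6 = m) :=
  stmt13_general q s h m x6 hs hm0 hΔ hx6
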